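/- arXiv:2008.09270 — 2 statements merged into one kernel-verified Lean document; each statement's English description precedes it below -/
import Mathlib

section
/- A vector space X over a field K is finite-dimensional if and only if every linear operator A : X → X that admits a right inverse (a linear map C : X → X with A ∘ C = id) is injective. -/
/-!
In finite dimension a one-sided inverse of an endomorphism is two-sided, so every endomorphism
with a right inverse is injective. Conversely, an infinite-dimensional space `X` has dimension
`κ + κ = κ`, hence `X ≃ X × X`; transported along this isomorphism, the projection onto the
second factor is surjective with a section but kills the first factor.
-/

theorem nonempty_linearEquiv_prod_self_of_not_finite {R M : Type*} [Ring R]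
    [StrongRankCondition R] [AddCommGroup M] [Module R M] [Module.Free R M]
    (h : ¬Module.Finite R M) : Nonempty (M ≃ₗ[R] M × M) :=
  nonempty_linearEquiv_of_rank_eq <| by
    rw [rank_prod', Cardinal.add_eq_self]
    rwa [← not_lt, Module.rank_lt_aleph0_iff]

namespace Module.End

theorem exists_rightInverse_not_injective_of_linearEquiv_prod {R M N : Type*} [Semiring R]
    [AddCommMonoid M] [Module R M] [AddCommMonoid N] [Module R N] [Nontrivial N]
    (e : M ≃ₗ[R] N × M) :
    ∃ A C : Module.End R M, A ∘ₗ C = LinearMap.id ∧ ¬Function.Injective A := by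
  refine ⟨LinearMap.snd R N M ∘ₗ e, e.symm ∘ₗ LinearMap.inr R N M, ?_, fun hinj => ?_⟩
  · ext x
    simp
  · obtain ⟨n, hn⟩ := exists_ne (0 : N)
    have h : e.symm (n, 0) = 0 := hinj (by simp)
    exact hn (by simpa using congrArg (fun x => (e x).1) h)

theorem exists_rightInverse_not_injective_of_not_finite {R M : Type*} [Ring R]
    [StrongRankCondition R] [AddCommGroup M] [Module R M] [Module.Free R M]
    (h : ¬Module.Finite R M) :
    ∃ A C : Module.End R M, A ∘ₗ C = LinearMap.id ∧ ¬Function.Injective A := by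
  have : Nontrivial M := not_subsingleton_iff_nontrivial.mp fun _ => h inferInstance
  obtain ⟨e⟩ := nonempty_linearEquiv_prod_self_of_not_finite h
  exact exists_rightInverse_not_injective_of_linearEquiv_prod e

end Module.End

theorem stmt_11 {K X : Type*} [Field K] [AddCommGroup X] [Module K X] :
    FiniteDimensional K X ↔
      ∀ A : X →ₗ[K] X, (∃ C : X →ₗ[K] X, A ∘ₗ C = LinearMap.id) →
        Function.Injective A := by
  constructor
  · rintro hfin A ⟨C, hAC⟩
    exact LinearMap.injective_of_comp_eq_id _ _ ((LinearMap.comp_eq_id_comm K X).mp hAC)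
  · intro h
    by_contra hinf
    obtain ⟨A, C, hAC, hA⟩ := Module.End.exists_rightInverse_not_injective_of_not_finite hinf
    exact hA (h A ⟨C, hAC⟩)
end

section
/- A vector space X over a field K is finite-dimensional if and only if every surjective linear operator A : X → X is injective. -/
/-! In finite dimension, rank–nullity makes every surjective endomorphism injective. Conversely,
an infinite-dimensional space has a basis indexed by an infinite set `ι`; since `ι ≃ Option ι`,
`ι` maps onto itself non-injectively, and extending such a map of basis vectors linearly gives a
surjective endomorphism that is not injective. -/

open Function Cardinal Module

theorem Function.exists_surjective_not_injective_of_infinite (ι : Type*) [Infinite ι] :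
    ∃ f : ι → ι, Surjective f ∧ ¬Injective f := by
  obtain ⟨e⟩ : Nonempty (ι ≃ Option ι) :=
    Cardinal.eq.1 (by rw [mk_option, add_one_eq (aleph0_le_mk ι)])
  obtain ⟨i₀⟩ := Infinite.nonempty ι
  refine ⟨fun i => (e i).getD i₀, fun i => ⟨e.symm (some i), by simp⟩, fun hf => ?_⟩
  have := e.symm.injective (hf (a₁ := e.symm none) (a₂ := e.symm (some i₀)) (by simp))
  simp at this

theorem Module.Basis.exists_surjective_not_injective_of_infinite {R M ι : Type*} [Semiring R]
    [Nontrivial R] [AddCommMonoid M] [Module R M] [Infinite ι] (b : Basis ι R M) :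
    ∃ A : M →ₗ[R] M, Surjective A ∧ ¬Function.Injective A := by
  obtain ⟨f, hf_surj, hf_inj⟩ := Function.exists_surjective_not_injective_of_infinite ι
  refine ⟨b.repr.symm.toLinearMap ∘ₗ Finsupp.lmapDomain R R f ∘ₗ b.repr.toLinearMap,
    b.repr.symm.surjective.comp ((Finsupp.mapDomain_surjective hf_surj).comp b.repr.surjective),
    fun hA => hf_inj fun i j hij => b.injective (hA ?_)⟩
  simp [hij]

theorem stmt_12 {K X : Type*} [Field K] [AddCommGroup X] [Module K X] :
    FiniteDimensional K X ↔
      ∀ A : X →ₗ[K] X, Function.Surjective A → Function.Injective A := by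
  refine ⟨fun _ A => LinearMap.injective_iff_surjective.mpr, fun h => ?_⟩
  by_contra hX
  let b := Basis.ofVectorSpace K X
  have : Infinite (Basis.ofVectorSpaceIndex K X) :=
    not_finite_iff_infinite.mp fun _ => hX (.of_basis b)
  obtain ⟨A, hA_surj, hA_inj⟩ := b.exists_surjective_not_injective_of_infinite
  exact hA_inj (h A hA_surj)
end
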